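/- Let G be a compact group which is D-quasi-random, with Haar probability measure dg, and let π : G → U(V) be a continuous unitary representation of G on a complex Hilbert space V having no nonzero π-fixed vectors. Then for all u, v ∈ V one has ∫_G | ⟨u, π^g v⟩_V |² dg ≤ D^{-1} · ‖u‖_V² · ‖v‖_V². -/

import Mathlib

open scoped InnerProductSpace

/-- A topological group `G` is `D`-quasi-random if every nontrivial finite-dimensional
continuous unitary representation of `G` has dimension at least `D`. -/
def IsQuasiRandom (G : Type*) [Group G] [TopologicalSpace G] (D : ℕ) : Prop :=
  ∀ (V : Type) [NormedAddCommGroup V] [InnerProductSpace ℂ V] [FiniteDimensional ℂ V]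
    (π : G →* (V ≃ₗᵢ[ℂ] V)),
    (∀ v : V, Continuous fun g : G => π g v) →
    (∃ (g : G) (v : V), π g v ≠ v) →
    D ≤ Module.finrank ℂ V

/-- The subspace of vectors fixed by a unitary representation `π`. -/
def fixedSubmodule {G V : Type*} [Group G] [NormedAddCommGroup V] [InnerProductSpace ℂ V]
    (π : G →* (V ≃ₗᵢ[ℂ] V)) : Submodule ℂ V where
  carrier := {v | ∀ g : G, π g v = v}
  add_mem' := by
    intro a b ha hb g
    rw [map_add, ha g, hb g]
  zero_mem' := by
    intro g
    exact map_zero _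
  smul_mem' := by
    intro c a ha g
    rw [map_smul, ha g]

lemma isClosed_fixedSubmodule {G V : Type*} [Group G] [NormedAddCommGroup V]
    [InnerProductSpace ℂ V] (π : G →* (V ≃ₗᵢ[ℂ] V)) :
    IsClosed ((fixedSubmodule π : Submodule ℂ V) : Set V) := by
  have h : ((fixedSubmodule π : Submodule ℂ V) : Set V) = ⋂ g : G, {v : V | π g v = v} := by
    ext v
    simp only [SetLike.mem_coe, Set.mem_iInter, Set.mem_setOf_eq]
    exact Iff.rfl
  rw [h]
  exact isClosed_iInter fun g => isClosed_eq (π g).continuous continuous_id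

/-- The orthogonal projection `P°_π : V → V` onto the subspace of `π`-fixed vectors,
viewed as a continuous linear map from `V` to itself. -/
noncomputable def fixedProjection {G V : Type*} [Group G] [NormedAddCommGroup V]
    [InnerProductSpace ℂ V] [CompleteSpace V] (π : G →* (V ≃ₗᵢ[ℂ] V)) : V →L[ℂ] V :=
  haveI : CompleteSpace (fixedSubmodule π) := (isClosed_fixedSubmodule π).completeSpace_coe
  (fixedSubmodule π).subtypeL.comp (fixedSubmodule π).orthogonalProjection


open MeasureTheory

/-!
The operator `A = ∫ |π g v⟩⟨π g v| dg` is compact and self-adjoint, commutes with `π`, and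
`∫ |⟨u, π^g v⟩|² dg = ⟨u, A u⟩ ≤ ‖A‖ ‖u‖²`. If `A ≠ 0`, then `A` has an eigenvalue `c` with
`|c| = ‖A‖`, whose eigenspace `E` is finite-dimensional and `π`-invariant; as `π` has no fixed
vectors, `π` restricted to `E` is nontrivial, so `dim E ≥ D`. Taking the trace of `A` over an
orthonormal basis of `E` and using Bessel's inequality gives `dim E · |c| ≤ ‖v‖²`.
-/

open InnerProductSpace Module End

theorem MeasureTheory.integral_mem_submodule {X E : Type*} [MeasurableSpace X] {μ : Measure X}
    [IsFiniteMeasure μ] [NormedAddCommGroup E] [NormedSpace ℝ E] [CompleteSpace E]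
    {S : Submodule ℝ E} (hS : IsClosed (S : Set E)) {g : X → E} (hg : Integrable g μ)
    (hgS : ∀ x, g x ∈ S) : ∫ x, g x ∂μ ∈ S := by
  rcases eq_or_ne μ 0 with rfl | hμ
  · simp [S.zero_mem]
  have : NeZero μ := ⟨hμ⟩
  rw [← measure_smul_average]
  exact S.smul_mem _ (S.convex.average_mem hS (ae_of_all _ hgS) hg)

theorem Continuous.integrable_of_compactSpace {X E : Type*} [TopologicalSpace X] [CompactSpace X]
    [MeasurableSpace X] [OpensMeasurableSpace X] {μ : Measure X} [IsFiniteMeasure μ]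
    [NormedAddCommGroup E] {g : X → E} (hg : Continuous g) : Integrable g μ :=
  hg.integrable_of_hasCompactSupport (.of_compactSpace g)

theorem InnerProductSpace.isCompactOperator_rankOne {𝕜 E F : Type*} [RCLike 𝕜]
    [NormedAddCommGroup E] [InnerProductSpace 𝕜 E] [NormedAddCommGroup F] [InnerProductSpace 𝕜 F]
    (x : E) (y : F) : IsCompactOperator (rankOne 𝕜 x y) :=
  (isCompactOperator_of_locallyCompactSpace_dom (innerSL 𝕜 y)).clm_comp
    (ContinuousLinearMap.toSpanSingleton 𝕜 x)

theorem IsCompactOperator.exists_hasEigenvalue_norm_eq_opNorm {𝕜 E : Type*} [RCLike 𝕜]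
    [NormedAddCommGroup E] [InnerProductSpace 𝕜 E] [CompleteSpace E] {T : E →L[𝕜] E}
    (hT : IsCompactOperator T) (hT' : IsSelfAdjoint T) (h0 : T ≠ 0) :
    ∃ c : 𝕜, HasEigenvalue (T : End 𝕜 E) c ∧ ‖c‖ = ‖T‖ := by
  have hρ := T.spectralRadius_eq_nnnorm hT'
  have hσ : (spectrum 𝕜 T).Nonempty := by
    by_contra h
    rw [Set.not_nonempty_iff_eq_empty] at h
    simp only [spectralRadius, h, Set.mem_empty_iff_false, not_false_eq_true, iSup_neg,
      bot_eq_zero', ciSup_const, ENNReal.zero_eq_coe] at hρ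
    exact h0 (nnnorm_eq_zero.1 hρ.symm)
  obtain ⟨c, hc, hcT⟩ := spectrum.exists_nnnorm_eq_spectralRadius_of_nonempty hσ
  rw [hρ, ENNReal.coe_inj] at hcT
  have hc0 : c ≠ 0 := by
    rintro rfl
    exact h0 (nnnorm_eq_zero.1 (by simpa using hcT.symm))
  exact ⟨c, (hT.hasEigenvalue_iff_mem_spectrum hc0).2 hc, congrArg NNReal.toReal hcT⟩

section FrameOperator

variable {X V : Type*} [TopologicalSpace X] [CompactSpace X] [MeasurableSpace X]
  [OpensMeasurableSpace X] {μ : Measure X} [IsFiniteMeasure μ]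
  [NormedAddCommGroup V] [InnerProductSpace ℂ V] {f : X → V}

theorem integrable_rankOne_self (hf : Continuous f) :
    Integrable (fun x => rankOne ℂ (f x) (f x)) μ := by
  refine Continuous.integrable_of_compactSpace ?_
  simp_rw [rankOne_def]
  fun_prop

theorem sum_integral_norm_inner_sq_le {ι : Type*} [Fintype ι] {b : ι → V}
    (hb : Orthonormal ℂ b) (hf : Continuous f) :
    ∑ i, ∫ x, ‖⟪b i, f x⟫_ℂ‖ ^ 2 ∂μ ≤ ∫ x, ‖f x‖ ^ 2 ∂μ := by
  rw [← integral_finsetSum _ fun i _ => Continuous.integrable_of_compactSpace (by fun_prop)]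
  exact integral_mono (Continuous.integrable_of_compactSpace (by fun_prop))
    (Continuous.integrable_of_compactSpace (by fun_prop)) fun x => hb.sum_inner_products_le (f x)

variable (μ) in
noncomputable def frameOperator (f : X → V) : V →L[ℂ] V := ∫ x, rankOne ℂ (f x) (f x) ∂μ

theorem frameOperator_apply (hf : Continuous f) (y : V) :
    frameOperator μ f y = ∫ x, ⟪f x, y⟫_ℂ • f x ∂μ :=
  ContinuousLinearMap.integral_apply (integrable_rankOne_self hf) y

variable [CompleteSpace V]

theorem inner_frameOperator_self (hf : Continuous f) (y : V) :
    ⟪y, frameOperator μ f y⟫_ℂ = ∫ x, ‖⟪y, f x⟫_ℂ‖ ^ 2 ∂μ := by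
  have hint : Integrable (fun x => ⟪f x, y⟫_ℂ • f x) μ :=
    Continuous.integrable_of_compactSpace (by fun_prop)
  rw [frameOperator_apply hf, ← integral_inner hint, ← integral_complex_ofReal]
  congr 1 with x
  rw [inner_smul_right, ← inner_conj_symm, RCLike.conj_mul]
  norm_cast

theorem integral_norm_inner_sq_le (hf : Continuous f) (y : V) :
    ∫ x, ‖⟪y, f x⟫_ℂ‖ ^ 2 ∂μ ≤ ‖frameOperator μ f‖ * ‖y‖ ^ 2 :=
  calc ∫ x, ‖⟪y, f x⟫_ℂ‖ ^ 2 ∂μ = ‖⟪y, frameOperator μ f y⟫_ℂ‖ := by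
        rw [inner_frameOperator_self hf, Complex.norm_of_nonneg (integral_nonneg fun _ => by positivity)]
    _ ≤ ‖y‖ * (‖frameOperator μ f‖ * ‖y‖) :=
        (norm_inner_le_norm _ _).trans (by gcongr; exact (frameOperator μ f).le_opNorm y)
    _ = ‖frameOperator μ f‖ * ‖y‖ ^ 2 := by ring

theorem isCompactOperator_frameOperator (hf : Continuous f) :
    IsCompactOperator (frameOperator μ f) :=
  integral_mem_submodule (S := (compactOperator (RingHom.id ℂ) V V).restrictScalars ℝ)
    isClosed_setOfPred_isCompactOperator (integrable_rankOne_self hf)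
    fun x => isCompactOperator_rankOne (f x) (f x)

theorem isSelfAdjoint_frameOperator (hf : Continuous f) :
    IsSelfAdjoint (frameOperator μ f) :=
  integral_mem_submodule (S := selfAdjoint.submodule ℝ (V →L[ℂ] V))
    (isClosed_eq continuous_star continuous_id) (integrable_rankOne_self hf)
    fun x => (isPositive_rankOne_self (f x)).isSelfAdjoint

theorem finrank_eigenspace_frameOperator_mul_norm_le (hf : Continuous f) (c : ℂ)
    [FiniteDimensional ℂ (eigenspace (frameOperator μ f : End ℂ V) c)] :
    finrank ℂ (eigenspace (frameOperator μ f : End ℂ V) c) * ‖c‖ ≤ ∫ x, ‖f x‖ ^ 2 ∂μ := by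
  set E := eigenspace (frameOperator μ f : End ℂ V) c
  let b := stdOrthonormalBasis ℂ E
  have hb : Orthonormal ℂ fun i => (b i : V) := b.orthonormal.comp_linearIsometry E.subtypeₗᵢ
  have hQ (i) : ∫ x, ‖⟪(b i : V), f x⟫_ℂ‖ ^ 2 ∂μ = ‖c‖ := by
    have hbi : frameOperator μ f (b i) = c • (b i : V) := mem_eigenspace_iff.1 (b i).2
    have h := inner_frameOperator_self (μ := μ) hf (b i : V)
    rw [hbi, inner_smul_right, inner_self_eq_norm_sq_to_K,
      hb.1 i, RCLike.ofReal_one, one_pow, mul_one] at h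
    rw [h, Complex.norm_of_nonneg (integral_nonneg fun _ => by positivity)]
  calc finrank ℂ E * ‖c‖ = ∑ i, ∫ x, ‖⟪(b i : V), f x⟫_ℂ‖ ^ 2 ∂μ := by simp [hQ]
    _ ≤ ∫ x, ‖f x‖ ^ 2 ∂μ := sum_integral_norm_inner_sq_le hb hf

end FrameOperator

section Representation

variable {G V : Type*} [Group G] [TopologicalSpace G] [NormedAddCommGroup V]
  [InnerProductSpace ℂ V] {π : G →* (V ≃ₗᵢ[ℂ] V)}

theorem map_frameOperator_orbit [CompactSpace G] [MeasurableSpace G] [OpensMeasurableSpace G]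
    [MeasurableMul G] {μ : Measure G} [IsFiniteMeasure μ] [μ.IsMulLeftInvariant] [CompleteSpace V]
    {v : V} (hv : Continuous fun g => π g v) (h : G) (y : V) :
    π h (frameOperator μ (fun g => π g v) y) = frameOperator μ (fun g => π g v) (π h y) := by
  rw [frameOperator_apply hv, frameOperator_apply hv]
  calc π h (∫ g, ⟪π g v, y⟫_ℂ • π g v ∂μ) = ∫ g, π h (⟪π g v, y⟫_ℂ • π g v) ∂μ :=
        ((π h).toLinearIsometry.integral_comp_comm _).symm
    _ = ∫ g, ⟪π (h * g) v, π h y⟫_ℂ • π (h * g) v ∂μ := by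
        simp [map_mul, LinearIsometryEquiv.inner_map_map]
    _ = ∫ g, ⟪π g v, π h y⟫_ℂ • π g v ∂μ :=
        integral_mul_left_eq_self (fun g => ⟪π g v, π h y⟫_ℂ • π g v) h

variable {D : ℕ}

theorem IsQuasiRandom.le_finrank (hG : IsQuasiRandom G D) {W : Type*} [NormedAddCommGroup W]
    [InnerProductSpace ℂ W] [FiniteDimensional ℂ W] (ρ : G →* (W ≃ₗᵢ[ℂ] W))
    (hρ : ∀ w, Continuous fun g => ρ g w) (hne : ∃ g w, ρ g w ≠ w) : D ≤ finrank ℂ W := by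
  let e := (stdOrthonormalBasis ℂ W).repr
  let ρ' : G →* (EuclideanSpace ℂ (Fin (finrank ℂ W)) ≃ₗᵢ[ℂ] _) :=
    { toFun g := (e.symm.trans (ρ g)).trans e
      map_one' := by ext; simp
      map_mul' g h := by ext; simp }
  have h := hG _ ρ' (fun w => e.continuous.comp (hρ _)) <| by
    obtain ⟨g, w, hw⟩ := hne
    exact ⟨g, e w, by simpa [ρ'] using hw⟩
  simpa using h

theorem IsQuasiRandom.le_finrank_of_invariant (hG : IsQuasiRandom G D)
    (hπ : ∀ v, Continuous fun g => π g v) (E : Submodule ℂ V) [FiniteDimensional ℂ E]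
    (hE : ∀ g, ∀ x ∈ E, π g x ∈ E) (hne : ∃ x ∈ E, ∃ g, π g x ≠ x) : D ≤ finrank ℂ E := by
  have hmap (g : G) : E.map (π g : V →ₗ[ℂ] V) = E :=
    le_antisymm (Submodule.map_le_iff_le_comap.2 (hE g)) fun x hx =>
      ⟨π g⁻¹ x, hE _ _ hx, by simp⟩
  let ρ : G →* (E ≃ₗᵢ[ℂ] E) :=
    { toFun g := ⟨(π g).toLinearEquiv.ofSubmodules E E (hmap g), fun x => (π g).norm_map x⟩
      map_one' := by ext; simp
      map_mul' g h := by
        ext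
        simp only [map_mul, LinearIsometryEquiv.coe_mul, Function.comp_apply]
        rfl }
  refine hG.le_finrank ρ (fun x => (hπ x).subtype_mk _) ?_
  obtain ⟨x, hx, g, hg⟩ := hne
  exact ⟨g, ⟨x, hx⟩, fun h => hg (congrArg Subtype.val h)⟩

theorem IsQuasiRandom.norm_frameOperator_orbit_le [IsTopologicalGroup G] [CompactSpace G]
    [MeasurableSpace G] [BorelSpace G] {μ : Measure G} [μ.IsHaarMeasure] [IsProbabilityMeasure μ]
    [CompleteSpace V] (hG : IsQuasiRandom G D) (hD : 0 < D) (hπ : ∀ v, Continuous fun g => π g v)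
    (hfix : ∀ v, (∀ g, π g v = v) → v = 0) (v : V) :
    ‖frameOperator μ fun g => π g v‖ ≤ (D : ℝ)⁻¹ * ‖v‖ ^ 2 := by
  set A := frameOperator μ fun g => π g v
  rcases eq_or_ne A 0 with hA0 | hA0
  · rw [hA0, norm_zero]
    positivity
  have hA := isCompactOperator_frameOperator (μ := μ) (hπ v)
  obtain ⟨c, hc, hcA⟩ :=
    hA.exists_hasEigenvalue_norm_eq_opNorm (isSelfAdjoint_frameOperator (hπ v)) hA0
  have := ContinuousLinearMap.finite_dimensional_eigenspace hA c
    (norm_ne_zero_iff.1 (hcA ▸ norm_ne_zero_iff.2 hA0))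
  have hdim : D ≤ finrank ℂ (eigenspace (A : End ℂ V) c) := by
    refine hG.le_finrank_of_invariant hπ _ (fun g x hx => ?_) ?_
    · rw [mem_eigenspace_iff, ContinuousLinearMap.coe_coe] at hx ⊢
      rw [← map_frameOperator_orbit (hπ v), hx, map_smul]
    · obtain ⟨x, hx, hx0⟩ := hc.exists_hasEigenvector
      by_contra! hfixed
      exact hx0 (hfix x fun g => hfixed x hx g)
  have htrace := finrank_eigenspace_frameOperator_mul_norm_le (μ := μ) (hπ v) c
  simp only [LinearIsometryEquiv.norm_map, integral_const, probReal_univ, one_smul] at htrace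
  rw [← hcA, inv_mul_eq_div, le_div_iff₀' (by positivity)]
  exact (mul_le_mul_of_nonneg_right (Nat.cast_le.2 hdim) (norm_nonneg c)).trans htrace

end Representation

/-- If `G` is a `D`-quasi-random compact group with Haar probability measure and
`π : G ↷ V` is a continuous unitary representation on a complex Hilbert space `V` with no
nonzero `π`-fixed vectors, then for all `u, v ∈ V`,
`∫_G |⟨u, π^g v⟩|² dg ≤ D^{-1}·‖u‖²·‖v‖²`. -/
theorem integral_inner_sq_no_fixed_vectors_bound
    {G V : Type*} [Group G] [TopologicalSpace G] [IsTopologicalGroup G] [CompactSpace G]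
    [MeasurableSpace G] [BorelSpace G]
    (μ : Measure G) [μ.IsHaarMeasure] [IsProbabilityMeasure μ]
    (D : ℕ) (hD : 0 < D) (hQR : IsQuasiRandom G D)
    [NormedAddCommGroup V] [InnerProductSpace ℂ V] [CompleteSpace V]
    (π : G →* (V ≃ₗᵢ[ℂ] V)) (hπ : ∀ v : V, Continuous fun g : G => π g v)
    (hfix : ∀ v : V, (∀ g : G, π g v = v) → v = 0)
    (u v : V) :
    ∫ g, ‖⟪u, π g v⟫_ℂ‖ ^ 2 ∂μ ≤ (D : ℝ)⁻¹ * ‖u‖ ^ 2 * ‖v‖ ^ 2 :=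
  calc ∫ g, ‖⟪u, π g v⟫_ℂ‖ ^ 2 ∂μ ≤ ‖frameOperator μ fun g => π g v‖ * ‖u‖ ^ 2 :=
        integral_norm_inner_sq_le (hπ v) u
    _ ≤ (D : ℝ)⁻¹ * ‖v‖ ^ 2 * ‖u‖ ^ 2 := by
        gcongr
        exact hQR.norm_frameOperator_orbit_le hD hπ hfix v
    _ = (D : ℝ)⁻¹ * ‖u‖ ^ 2 * ‖v‖ ^ 2 := by ring
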